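/- arXiv:0901.4707 — 2 statements merged into one kernel-verified Lean document; each statement's English description precedes it below -/
import Mathlib

section
/- For every integer m > 1, the group Ex_m has exactly 2^{2m−1} + 2 conjugacy classes. -/
open Finset

/-- The excess group `Ex_m`: triples `(v, h, ε)` with `v, h ∈ (ℤ/2ℤ)^m`,
`ε ∈ {±1}` (realized as `ℤˣ`), and the coordinates of `v` summing to `0`. -/
@[ext]
structure Ex (m : ℕ) where
  v : Fin m → ZMod 2
  h : Fin m → ZMod 2
  ε : ℤˣ
  hv : ∑ i, v i = 0

namespace Ex

variable {m : ℕ}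

/-- The exponent of `(−1)` in the product `(v,h,ε)·(v',h',ε')`:
`Σ_{1≤i<j≤m} v_j (v'_i + h'_i) + Σ_{1≤i≤j≤m} v'_j h_i`, computed from the
representatives in `{0,1}` of the `ℤ/2ℤ`-coordinates. -/
def expo (x y : Ex m) : ℕ :=
  (∑ p ∈ Finset.univ.filter (fun p : Fin m × Fin m => p.1 < p.2),
      (x.v p.2).val * ((y.v p.1).val + (y.h p.1).val)) +
  ∑ p ∈ Finset.univ.filter (fun p : Fin m × Fin m => p.1 ≤ p.2),
      (y.v p.2).val * (x.h p.1).val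

/-- The multiplication of `Ex_m`:
`(v,h,ε)·(v',h',ε') = (v+v', h+h', ε ε' (−1)^{Σ_{i<j} v_j(v'_i+h'_i) + Σ_{i≤j} v'_j h_i})`. -/
def mul' (x y : Ex m) : Ex m :=
  ⟨x.v + y.v, x.h + y.h, x.ε * y.ε * (-1) ^ expo x y, by
    simp [Finset.sum_add_distrib, x.hv, y.hv]⟩

/-- The identity element `(0, 0, +1)` of `Ex_m`. -/
def one' : Ex m := ⟨0, 0, 1, by simp⟩

/-- The element `(0, 0, −1)` of `Ex_m`. -/
def negOne' : Ex m := ⟨0, 0, -1, by simp⟩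

/-- Inversion in `Ex_m`. -/
def inv' (x : Ex m) : Ex m := ⟨x.v, x.h, x.ε * (-1) ^ expo x x, x.hv⟩

-- auxiliary: the ZMod-2-valued bilinear form underlying `expo`
private def Bf (a b c d : Fin m → ZMod 2) : ZMod 2 :=
  (∑ p ∈ Finset.univ.filter (fun p : Fin m × Fin m => p.1 < p.2),
      a p.2 * (c p.1 + d p.1)) +
  ∑ p ∈ Finset.univ.filter (fun p : Fin m × Fin m => p.1 ≤ p.2),
      c p.2 * b p.1

private def χ (a : ZMod 2) : ℤˣ := (-1) ^ a.val

private lemma χ_add : ∀ a b : ZMod 2, χ (a + b) = χ a * χ b := by decide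

private lemma val_cast : ∀ a : ZMod 2, ((a.val : ℕ) : ZMod 2) = a := by decide

private lemma neg_one_pow_nat (s : ℕ) : ((-1 : ℤˣ)) ^ s = χ ((s : ZMod 2)) := by
  induction s with
  | zero => simp [χ]
  | succ k ih =>
      rw [pow_succ, ih]
      have hc : ((k + 1 : ℕ) : ZMod 2) = ((k : ℕ) : ZMod 2) + 1 := by push_cast; ring
      have hx : ∀ a : ZMod 2, χ (a + 1) = χ a * (-1) := by decide
      rw [hc, hx]

private lemma expo_cast (x y : Ex m) :
    ((expo x y : ℕ) : ZMod 2) = Bf x.v x.h y.v y.h := by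
  unfold expo Bf
  push_cast
  simp [val_cast]

private lemma sign_eq (x y : Ex m) :
    ((-1 : ℤˣ)) ^ expo x y = χ (Bf x.v x.h y.v y.h) := by
  rw [neg_one_pow_nat, expo_cast]

private lemma Bf_add_left (a b a' b' c d : Fin m → ZMod 2) :
    Bf (a + a') (b + b') c d = Bf a b c d + Bf a' b' c d := by
  unfold Bf
  simp only [Pi.add_apply, add_mul, mul_add, Finset.sum_add_distrib]
  ring

private lemma Bf_add_right (a b c d c' d' : Fin m → ZMod 2) :
    Bf a b (c + c') (d + d') = Bf a b c d + Bf a b c' d' := by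
  unfold Bf
  simp only [Pi.add_apply, add_mul, mul_add, Finset.sum_add_distrib]
  ring

private lemma Bf_zero_left (c d : Fin m → ZMod 2) : Bf 0 0 c d = 0 := by
  unfold Bf; simp

private lemma Bf_zero_right (a b : Fin m → ZMod 2) : Bf a b 0 0 = 0 := by
  unfold Bf; simp

instance : Group (Ex m) where
  mul := mul'
  one := one'
  inv := inv'
  mul_assoc a b c := by
    refine Ex.ext ?_ ?_ ?_
    · show (a.v + b.v) + c.v = a.v + (b.v + c.v)
      exact add_assoc _ _ _
    · show (a.h + b.h) + c.h = a.h + (b.h + c.h)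
      exact add_assoc _ _ _
    · show (a.ε * b.ε * (-1) ^ expo a b) * c.ε * (-1) ^ expo (mul' a b) c =
        a.ε * (b.ε * c.ε * (-1) ^ expo b c) * (-1) ^ expo a (mul' b c)
      rw [sign_eq, sign_eq, sign_eq, sign_eq]
      have h1 : (mul' a b).v = a.v + b.v := rfl
      have h2 : (mul' a b).h = a.h + b.h := rfl
      have h3 : (mul' b c).v = b.v + c.v := rfl
      have h4 : (mul' b c).h = b.h + c.h := rfl
      rw [h1, h2, h3, h4, Bf_add_left, Bf_add_right, χ_add, χ_add]
      simp only [mul_assoc, mul_comm, mul_left_comm]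
  one_mul a := by
    refine Ex.ext ?_ ?_ ?_
    · show 0 + a.v = a.v
      exact zero_add _
    · show 0 + a.h = a.h
      exact zero_add _
    · show 1 * a.ε * (-1) ^ expo (one' : Ex m) a = a.ε
      have h0 : expo (one' : Ex m) a = 0 := by simp [expo, one']
      rw [h0]; simp
  mul_one a := by
    refine Ex.ext ?_ ?_ ?_
    · show a.v + 0 = a.v
      exact add_zero _
    · show a.h + 0 = a.h
      exact add_zero _
    · show a.ε * 1 * (-1) ^ expo a (one' : Ex m) = a.ε
      have h0 : expo a (one' : Ex m) = 0 := by simp [expo, one']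
      rw [h0]; simp
  inv_mul_cancel a := by
    refine Ex.ext ?_ ?_ ?_
    · show a.v + a.v = 0
      funext i
      exact CharTwo.add_self_eq_zero _
    · show a.h + a.h = 0
      funext i
      exact CharTwo.add_self_eq_zero _
    · show (a.ε * (-1) ^ expo a a) * a.ε * (-1) ^ expo (inv' a) a = 1
      have he : expo (inv' a) a = expo a a := rfl
      rw [he]
      have h1 : a.ε * a.ε = 1 := Int.units_mul_self a.ε
      have h2 : ((-1 : ℤˣ)) ^ expo a a * (-1) ^ expo a a = 1 :=
        Int.units_mul_self _
      calc (a.ε * (-1) ^ expo a a) * a.ε * (-1) ^ expo a a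
          = (a.ε * a.ε) * ((-1) ^ expo a a * (-1) ^ expo a a) := by
            simp only [mul_assoc, mul_comm, mul_left_comm]
        _ = 1 := by rw [h1, h2, one_mul]

lemma mul_def (x y : Ex m) : x * y = mul' x y := rfl
lemma one_def : (1 : Ex m) = one' := rfl

end Ex

-- ===================== auxiliary development =====================

section Aux

open Finset

variable {m : ℕ}

lemma sum_diag_eq (f : Fin m × Fin m → ZMod 2) :
    ∑ p ∈ univ.filter (fun p : Fin m × Fin m => p.1 = p.2), f p = ∑ i, f (i, i) := by
  refine Finset.sum_bij' (fun p _ => p.1) (fun i _ => (i, i)) ?_ ?_ ?_ ?_ ?_ <;>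
    simp +contextual [Prod.ext_iff]

lemma sum_le_split (f : Fin m × Fin m → ZMod 2) :
    ∑ p ∈ univ.filter (fun p : Fin m × Fin m => p.1 ≤ p.2), f p
      = ∑ p ∈ univ.filter (fun p : Fin m × Fin m => p.1 < p.2), f p + ∑ i, f (i, i) := by
  have h : (univ.filter fun p : Fin m × Fin m => p.1 ≤ p.2)
      = (univ.filter fun p : Fin m × Fin m => p.1 < p.2)
        ∪ (univ.filter fun p : Fin m × Fin m => p.1 = p.2) := by
    ext p; simp [le_iff_lt_or_eq]
  have hd : Disjoint (univ.filter fun p : Fin m × Fin m => p.1 < p.2)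
      (univ.filter fun p : Fin m × Fin m => p.1 = p.2) := by
    rw [Finset.disjoint_left]
    intro p hp hq
    simp only [mem_filter] at hp hq
    omega
  rw [h, Finset.sum_union hd, sum_diag_eq]

lemma sum_swap_lt (f : Fin m × Fin m → ZMod 2) :
    ∑ p ∈ univ.filter (fun p : Fin m × Fin m => p.1 < p.2), f p.swap
      = ∑ p ∈ univ.filter (fun p : Fin m × Fin m => p.2 < p.1), f p := by
  refine Finset.sum_bij' (fun p _ => p.swap) (fun p _ => p.swap) ?_ ?_ ?_ ?_ ?_ <;>
    simp +contextual [Prod.ext_iff]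

lemma sum_trichotomy (f : Fin m × Fin m → ZMod 2) :
    ∑ p : Fin m × Fin m, f p
      = ∑ p ∈ univ.filter (fun p : Fin m × Fin m => p.1 < p.2), f p
        + ∑ p ∈ univ.filter (fun p : Fin m × Fin m => p.2 < p.1), f p
        + ∑ i, f (i, i) := by
  have h1 : (univ : Finset (Fin m × Fin m))
      = (univ.filter fun p : Fin m × Fin m => p.1 < p.2)
        ∪ ((univ.filter fun p : Fin m × Fin m => p.2 < p.1)
        ∪ (univ.filter fun p : Fin m × Fin m => p.1 = p.2)) := by
    ext p; simp; omega
  have hd1 : Disjoint (univ.filter fun p : Fin m × Fin m => p.2 < p.1)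
      (univ.filter fun p : Fin m × Fin m => p.1 = p.2) := by
    rw [Finset.disjoint_left]; intro p hp hq
    simp only [mem_filter] at hp hq; omega
  have hd2 : Disjoint (univ.filter fun p : Fin m × Fin m => p.1 < p.2)
      ((univ.filter fun p : Fin m × Fin m => p.2 < p.1)
        ∪ (univ.filter fun p : Fin m × Fin m => p.1 = p.2)) := by
    rw [Finset.disjoint_left]; intro p hp hq
    simp only [mem_filter, Finset.mem_union] at hp hq; omega
  conv_lhs => rw [h1]
  rw [Finset.sum_union hd2, Finset.sum_union hd1, sum_diag_eq, add_assoc]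

lemma sum_prod_eq (a c : Fin m → ZMod 2) :
    ∑ p : Fin m × Fin m, a p.2 * c p.1 = (∑ i, a i) * (∑ i, c i) := by
  rw [← Finset.univ_product_univ, Finset.sum_product]
  have h : ∀ x : Fin m, ∑ y, a y * c x = (∑ i, a i) * c x :=
    fun x => (Finset.sum_mul _ _ _).symm
  rw [Finset.sum_congr rfl (fun x _ => h x), ← Finset.mul_sum, mul_comm]

lemma master (a b c d : Fin m → ZMod 2) (ha : ∑ i, a i = 0) :
    ((∑ p ∈ univ.filter (fun p : Fin m × Fin m => p.1 < p.2), a p.2 * (c p.1 + d p.1)) +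
     ∑ p ∈ univ.filter (fun p : Fin m × Fin m => p.1 ≤ p.2), c p.2 * b p.1) +
    ((∑ p ∈ univ.filter (fun p : Fin m × Fin m => p.1 < p.2), c p.2 * (a p.1 + b p.1)) +
     ∑ p ∈ univ.filter (fun p : Fin m × Fin m => p.1 ≤ p.2), a p.2 * d p.1)
      = ∑ i, (a i * c i + a i * d i + b i * c i) := by
  have e1 : ∀ p : Fin m × Fin m, a p.2 * (c p.1 + d p.1) = a p.2 * c p.1 + a p.2 * d p.1 :=
    fun p => mul_add _ _ _
  have e2 : ∀ p : Fin m × Fin m, c p.2 * (a p.1 + b p.1) = c p.2 * a p.1 + c p.2 * b p.1 :=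
    fun p => mul_add _ _ _
  simp only [e1, e2, Finset.sum_add_distrib]
  rw [sum_le_split (fun p => c p.2 * b p.1), sum_le_split (fun p => a p.2 * d p.1)]
  have e3 : ∑ p ∈ univ.filter (fun p : Fin m × Fin m => p.1 < p.2), c p.2 * a p.1
      = ∑ p ∈ univ.filter (fun p : Fin m × Fin m => p.2 < p.1), a p.2 * c p.1 := by
    rw [← sum_swap_lt (fun p => a p.2 * c p.1)]
    exact Finset.sum_congr rfl fun p _ => mul_comm _ _
  rw [e3]
  have e4 : (∑ p ∈ univ.filter (fun p : Fin m × Fin m => p.1 < p.2), a p.2 * c p.1)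
      + ∑ p ∈ univ.filter (fun p : Fin m × Fin m => p.2 < p.1), a p.2 * c p.1
      = ∑ i, a i * c i := by
    have ht := sum_trichotomy (fun p : Fin m × Fin m => a p.2 * c p.1)
    rw [sum_prod_eq, ha, zero_mul] at ht
    have h2 : ∀ x y z : ZMod 2, (0 : ZMod 2) = x + y + z → x + y = z := by decide
    exact h2 _ _ _ ht
  have hD : ∑ i : Fin m, c ((i, i) : Fin m × Fin m).2 * b ((i, i) : Fin m × Fin m).1
      = ∑ i, b i * c i := Finset.sum_congr rfl fun i _ => mul_comm _ _
  have hF : ∑ i : Fin m, a ((i, i) : Fin m × Fin m).2 * d ((i, i) : Fin m × Fin m).1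
      = ∑ i, a i * d i := Finset.sum_congr rfl fun i _ => rfl
  have h2 : (2 : ZMod 2) = 0 := by decide
  rw [hD, hF]
  have hbc : ∑ x, c x * b x = ∑ x, b x * c x := Finset.sum_congr rfl fun i _ => mul_comm _ _
  linear_combination -hbc + e4 + hD
    + ((∑ p ∈ univ.filter (fun p : Fin m × Fin m => p.1 < p.2), a p.2 * d p.1)
      + ∑ p ∈ univ.filter (fun p : Fin m × Fin m => p.1 < p.2), c p.2 * b p.1) * h2

end Aux

namespace Ex

open Finset

variable {m : ℕ}

private lemma Bf_comm_sum (x y : Ex m) :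
    Bf x.v x.h y.v y.h + Bf y.v y.h x.v x.h
      = ∑ i, (x.v i * y.v i + x.v i * y.h i + x.h i * y.v i) := by
  unfold Bf
  exact master x.v x.h y.v y.h x.hv

private lemma eps_mul (x y : Ex m) :
    (x * y).ε = x.ε * y.ε * χ (Bf x.v x.h y.v y.h) := by
  show (mul' x y).ε = _
  show x.ε * y.ε * (-1) ^ expo x y = _
  rw [sign_eq]

private lemma χ_inj : Function.Injective χ := by
  intro a b; revert a b; decide

lemma comm_iff (x y : Ex m) :
    x * y = y * x ↔ (∑ i, (x.v i * y.v i + x.v i * y.h i + x.h i * y.v i)) = 0 := by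
  constructor
  · intro h
    have h1 : (x * y).ε = (y * x).ε := by rw [h]
    rw [eps_mul, eps_mul, mul_comm y.ε x.ε] at h1
    have h2 := mul_left_cancel h1
    have h3 : Bf x.v x.h y.v y.h = Bf y.v y.h x.v x.h := χ_inj h2
    rw [← Bf_comm_sum, h3]
    exact CharTwo.add_self_eq_zero _
  · intro h
    have h4 := Bf_comm_sum x y
    rw [h] at h4
    have h3 : Bf x.v x.h y.v y.h = Bf y.v y.h x.v x.h := by
      have : ∀ a b : ZMod 2, a + b = 0 → a = b := by decide
      exact this _ _ h4
    refine Ex.ext ?_ ?_ ?_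
    · exact add_comm _ _
    · exact add_comm _ _
    · rw [eps_mul, eps_mul, h3, mul_comm x.ε y.ε]

lemma negOne_mul (x : Ex m) : (negOne' : Ex m) * x = ⟨x.v, x.h, -x.ε, x.hv⟩ := by
  refine Ex.ext ?_ ?_ ?_
  · exact zero_add _
  · exact zero_add _
  · show (negOne' : Ex m).ε * x.ε * (-1) ^ expo negOne' x = -x.ε
    have h0 : expo (negOne' : Ex m) x = 0 := by simp [expo, negOne']
    rw [h0, pow_zero, mul_one]
    show (-1) * x.ε = -x.ε
    rw [neg_one_mul]

/-- delta function -/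
private def dlt (i : Fin m) : Fin m → ZMod 2 := fun j => if j = i then 1 else 0

private lemma sum_dlt (i : Fin m) : ∑ j, dlt i j = 1 := by
  simp [dlt]

private lemma dp_dlt (a : Fin m → ZMod 2) (i : Fin m) : ∑ j, a j * dlt i j = a i := by
  simp [dlt, mul_ite]

lemma mem_center_iff' (hm : 0 < m) (x : Ex m) :
    x ∈ Subgroup.center (Ex m) ↔ x.v = 0 ∧ (x.h = 0 ∨ x.h = fun _ => 1) := by
  constructor
  · intro hx
    have hall : ∀ y : Ex m,
        (∑ i, (x.v i * y.v i + x.v i * y.h i + x.h i * y.v i)) = 0 := by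
      intro y
      exact (comm_iff x y).mp ((Subgroup.mem_center_iff.mp hx y).symm)
    have hv0 : x.v = 0 := by
      funext i
      have h := hall ⟨0, dlt i, 1, by simp⟩
      simpa [dp_dlt] using h
    have hconst : ∀ i j : Fin m, x.h i = x.h j := by
      intro i j
      by_cases hij : i = j
      · rw [hij]
      · have h := hall ⟨dlt i + dlt j, 0, 1, by
          simp only [Pi.add_apply]
          rw [Finset.sum_add_distrib, sum_dlt, sum_dlt]; decide⟩
        simp only [hv0, Pi.zero_apply, zero_mul, mul_zero, zero_add, add_zero,
          Pi.add_apply, mul_add, Finset.sum_add_distrib, dp_dlt] at h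
        have : ∀ a b : ZMod 2, a + b = 0 → a = b := by decide
        exact this _ _ h
    refine ⟨hv0, ?_⟩
    set i0 : Fin m := ⟨0, hm⟩
    have hz : x.h i0 = 0 ∨ x.h i0 = 1 := by
      have : ∀ a : ZMod 2, a = 0 ∨ a = 1 := by decide
      exact this _
    rcases hz with hz | hz
    · left; funext i; rw [hconst i i0, hz]; rfl
    · right; funext i; rw [hconst i i0, hz]
  · rintro ⟨hv0, hh⟩
    rw [Subgroup.mem_center_iff]
    intro g
    rw [comm_iff g x]
    have hsum : ∀ lam : ZMod 2, x.h = (fun _ => lam) →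
        (∑ i, (g.v i * x.v i + g.v i * x.h i + g.h i * x.v i)) = 0 := by
      intro lam hlam
      have : ∀ i, g.v i * x.v i + g.v i * x.h i + g.h i * x.v i = g.v i * lam := by
        intro i; rw [hv0, hlam]; simp
      rw [Finset.sum_congr rfl fun i _ => this i, ← Finset.sum_mul, g.hv, zero_mul]
    rcases hh with hh | hh
    · exact hsum 0 (by rw [hh]; rfl)
    · exact hsum 1 hh

instance : Finite (Ex m) := by
  apply Finite.of_injective (fun x : Ex m => (x.v, x.h, x.ε))
  intro a b h
  simp only [Prod.mk.injEq] at h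
  exact Ex.ext h.1 h.2.1 h.2.2

/-- cardinality of `Ex m` -/
lemma card_ex (hm : 0 < m) : Nat.card (Ex m) = 2 ^ (2 * m) := by
  set i0 : Fin m := ⟨0, hm⟩
  -- split off the sign and h
  have e1 : Ex m ≃ {v : Fin m → ZMod 2 // ∑ i, v i = 0} × (Fin m → ZMod 2) × ℤˣ :=
    { toFun := fun x => (⟨x.v, x.hv⟩, x.h, x.ε)
      invFun := fun p => ⟨p.1.1, p.2.1, p.2.2, p.1.2⟩
      left_inv := fun x => rfl
      right_inv := fun p => rfl }
  have key : ∀ w : Fin m → ZMod 2, ∑ j, (w j + (∑ i, w i) * dlt i0 j)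
      = (∑ i, w i) + (∑ i, w i) := by
    intro w
    rw [Finset.sum_add_distrib, ← Finset.mul_sum, sum_dlt, mul_one]
  have e2 : (Fin m → ZMod 2) ≃ {v : Fin m → ZMod 2 // ∑ i, v i = 0} × ZMod 2 :=
    { toFun := fun w => (⟨fun j => w j + (∑ i, w i) * dlt i0 j, by
        rw [key w]; exact CharTwo.add_self_eq_zero _⟩, ∑ i, w i)
      invFun := fun p => fun j => p.1.1 j + p.2 * dlt i0 j
      left_inv := fun w => by
        funext j
        show (w j + (∑ i, w i) * dlt i0 j) + (∑ i, w i) * dlt i0 j = w j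
        have : ∀ a b : ZMod 2, a + b + b = a := by decide
        exact this _ _
      right_inv := fun p => by
        obtain ⟨⟨v, hv⟩, s⟩ := p
        have hs : (∑ i, (v i + s * dlt i0 i)) = s := by
          rw [Finset.sum_add_distrib, hv, ← Finset.mul_sum, sum_dlt, mul_one, zero_add]
        refine Prod.ext ?_ ?_
        · apply Subtype.ext
          funext j
          show (v j + s * dlt i0 j) + (∑ i, (v i + s * dlt i0 i)) * dlt i0 j = v j
          rw [hs]
          have : ∀ a b : ZMod 2, a + b + b = a := by decide
          exact this _ _
        · exact hs }
  have hfun : Nat.card (Fin m → ZMod 2) = 2 ^ m := by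
    simp [Nat.card_eq_fintype_card]
  have h2 : Nat.card {v : Fin m → ZMod 2 // ∑ i, v i = 0} * 2 = 2 ^ m := by
    rw [← hfun, Nat.card_congr e2, Nat.card_prod]
    congr 1
    simp [Nat.card_eq_fintype_card]
  have hunits : Nat.card ℤˣ = 2 := by
    rw [Nat.card_eq_fintype_card]; rfl
  rw [Nat.card_congr e1, Nat.card_prod, Nat.card_prod, hfun, hunits]
  have : Nat.card {v : Fin m → ZMod 2 // ∑ i, v i = 0} * (2 ^ m * 2)
      = (Nat.card {v : Fin m → ZMod 2 // ∑ i, v i = 0} * 2) * 2 ^ m := by ring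
  rw [this, h2, ← pow_add, two_mul]

lemma card_center (hm : 1 < m) : Nat.card (Subgroup.center (Ex m)) = 4 := by
  have hm0 : 0 < m := by omega
  set i0 : Fin m := ⟨0, hm0⟩
  have e : Subgroup.center (Ex m) ≃ ZMod 2 × ℤˣ :=
    { toFun := fun x => (x.1.h i0, x.1.ε)
      invFun := fun p => ⟨⟨0, fun _ => p.1, p.2, by simp⟩, by
        rw [mem_center_iff' hm0]
        refine ⟨rfl, ?_⟩
        have : ∀ a : ZMod 2, a = 0 ∨ a = 1 := by decide
        rcases this p.1 with h | h
        · left; funext j; exact h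
        · right; funext j; exact h⟩
      left_inv := fun x => by
        obtain ⟨x, hx⟩ := x
        rw [mem_center_iff' hm0] at hx
        apply Subtype.ext
        refine Ex.ext ?_ ?_ ?_
        · exact hx.1.symm
        · show (fun _ => x.h i0) = x.h
          rcases hx.2 with h | h <;> (funext j; rw [h]; try rfl)
        · rfl
      right_inv := fun p => rfl }
  rw [Nat.card_congr e, Nat.card_prod, Nat.card_eq_fintype_card,
    Nat.card_eq_fintype_card]
  rfl

lemma conj_v (u x : Ex m) : (u * x * u⁻¹).v = x.v := by
  have h : (u * x * u⁻¹).v = (u.v + x.v) + u.v := rfl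
  rw [h]
  funext i
  show (u.v i + x.v i) + u.v i = x.v i
  have : ∀ a b : ZMod 2, (a + b) + a = b := by decide
  exact this _ _

lemma conj_h (u x : Ex m) : (u * x * u⁻¹).h = x.h := by
  have h : (u * x * u⁻¹).h = (u.h + x.h) + u.h := rfl
  rw [h]
  funext i
  show (u.h i + x.h i) + u.h i = x.h i
  have : ∀ a b : ZMod 2, (a + b) + a = b := by decide
  exact this _ _

lemma eps_dichotomy (w x : Ex m) (hv : w.v = x.v) (hh : w.h = x.h) :
    w = x ∨ w = negOne' * x := by
  rcases Int.units_eq_one_or (w.ε * x.ε⁻¹) with h | h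
  · left
    refine Ex.ext hv hh ?_
    calc w.ε = (w.ε * x.ε⁻¹) * x.ε := by rw [mul_assoc, inv_mul_cancel x.ε, mul_one]
      _ = x.ε := by rw [h, one_mul]
  · right
    rw [negOne_mul]
    refine Ex.ext hv hh ?_
    show w.ε = -x.ε
    calc w.ε = (w.ε * x.ε⁻¹) * x.ε := by rw [mul_assoc, inv_mul_cancel x.ε, mul_one]
      _ = -x.ε := by rw [h, neg_one_mul]

lemma ne_negOne_mul (x : Ex m) : x ≠ negOne' * x := by
  intro h
  have hε : x.ε = (negOne' * x).ε := by rw [← h]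
  rw [negOne_mul] at hε
  have : x.ε = -x.ε := hε
  rcases Int.units_eq_one_or x.ε with h1 | h1 <;> rw [h1] at this <;> exact absurd this (by decide)

lemma carrier_eq (x : Ex m) (hc : ConjClasses.mk x ∈ ConjClasses.noncenter (Ex m)) :
    (ConjClasses.mk x).carrier = {x, negOne' * x} := by
  have hsub : (ConjClasses.mk x).carrier ⊆ {x, negOne' * x} := by
    intro a ha
    rw [ConjClasses.mem_carrier_iff_mk_eq, ConjClasses.mk_eq_mk_iff_isConj] at ha
    obtain ⟨u, hu⟩ := isConj_iff.mp ha.symm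
    have hv : a.v = x.v := by rw [← hu]; exact conj_v u x
    have hh : a.h = x.h := by rw [← hu]; exact conj_h u x
    rcases eps_dichotomy a x hv hh with h | h
    · exact Or.inl h
    · exact Or.inr h
  apply Set.Subset.antisymm hsub
  have hxmem : x ∈ (ConjClasses.mk x).carrier := by
    rw [ConjClasses.mem_carrier_iff_mk_eq]
  have hzmem : negOne' * x ∈ (ConjClasses.mk x).carrier := by
    obtain ⟨p, hp, q, hq, hpq⟩ := (ConjClasses.mem_noncenter _).mp hc
    rcases hsub hp with h1 | h1 <;> rcases hsub hq with h2 | h2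
    · exact absurd (h1.trans h2.symm) hpq
    · rw [← h2]; exact hq
    · rw [← h1]; exact hp
    · exact absurd (h1.trans h2.symm) hpq
  intro a ha
  rcases ha with h | h
  · rw [h]; exact hxmem
  · rw [h]; exact hzmem

lemma card_noncenter_carrier (c : ConjClasses (Ex m))
    (hc : c ∈ ConjClasses.noncenter (Ex m)) : Nat.card c.carrier = 2 := by
  obtain ⟨x, rfl⟩ := c.exists_rep
  rw [carrier_eq x hc, Nat.card_coe_set_eq, Set.ncard_pair (ne_negOne_mul x)]

end Ex

/-- For every integer `m > 1`, the group `Ex_m` has exactly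
`2^(2m−1) + 2` conjugacy classes. -/
theorem ex_card_conjClasses (m : ℕ) (hm : 1 < m) :
    Nat.card (ConjClasses (Ex m)) = 2 ^ (2 * m - 1) + 2 := by
  classical
  have hm0 : 0 < m := by omega
  set s := ConjClasses.noncenter (Ex m) with hs
  have key := Group.nat_card_center_add_sum_card_noncenter_eq_card (Ex m)
  have hfin : s.Finite := Set.toFinite s
  have hsum : (∑ᶠ x ∈ s, Nat.card x.carrier) = s.ncard * 2 := by
    rw [finsum_mem_eq_finite_toFinset_sum _ hfin]
    rw [Finset.sum_congr rfl (fun x hx => Ex.card_noncenter_carrier x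
      ((Set.Finite.mem_toFinset hfin).mp hx))]
    rw [Finset.sum_const, Set.ncard_eq_toFinset_card _ hfin, smul_eq_mul]
  rw [hsum, Ex.card_center hm, Ex.card_ex hm0] at key
  have hcompl : sᶜ.ncard = 4 := by
    have hb := ConjClasses.mk_bijOn (Ex m)
    have himg : ConjClasses.mk '' (Subgroup.center (Ex m) : Set (Ex m)) = sᶜ := hb.image_eq
    rw [← himg, Set.ncard_image_of_injOn hb.injOn, ← Nat.card_coe_set_eq]
    rw [← Ex.card_center hm]
    rfl
  have htot : s.ncard + sᶜ.ncard = Nat.card (ConjClasses (Ex m)) :=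
    Set.ncard_add_ncard_compl s
  rw [hcompl] at htot
  have hpow : 2 ^ (2 * m) = 2 * 2 ^ (2 * m - 1) := by
    rw [← pow_succ']
    congr 1
    omega
  omega
end

section
/- Let m be a positive integer and let P(m,n) denote the number of m×n Cauchon diagrams C with det(M(C)) ≠ 0. Then the sequence (P(m,n))_{n≥1} satisfies a linear recurrence over ℚ: there exist a natural number d and rational constants c_1,…,c_d such that P(m,n) = Σ_{i=1}^d c_i · P(m,n−i) for all n ≥ d. -/
/-- An `m × n` diagram: each square is black or white (`true` = white). -/
abbrev Diagram (m n : ℕ) := Fin m → Fin n → Bool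

/-- The alphabet `Σ_m` of `m × 1` columns. -/
abbrev Col (m : ℕ) := Fin m → Bool

/-- The `m × n` diagram corresponding to a word of `n` columns (concatenated
from left to right). -/
def toDiagram {m : ℕ} (w : List (Col m)) : Diagram m w.length :=
  fun i j => (w.get j) i

/-- A diagram is Cauchon if for every black square, either all squares to its
left in its row are black, or all squares above it in its column are black. -/
def IsCauchon {m n : ℕ} (D : Diagram m n) : Prop :=
  ∀ (i : Fin m) (j : Fin n), D i j = false →
    (∀ j' : Fin n, j' < j → D i j' = false) ∨
    (∀ i' : Fin m, i' < i → D i' j = false)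

open Finset

/-- The finite set of white squares of a diagram. -/
def whites {m n : ℕ} (D : Diagram m n) : Finset (Fin m × Fin n) :=
  Finset.univ.filter fun p => D p.1 p.2 = true

/-- The entry of the skew-adjacency matrix attached to a pair of squares:
`+1` if `p` is strictly to the left of `q` in the same row, or strictly above `q`
in the same column; `-1` in the two opposite situations; `0` otherwise. -/
def adjEntry {m n : ℕ} (p q : Fin m × Fin n) : ℤ :=
  if (p.1 = q.1 ∧ p.2 < q.2) ∨ (p.2 = q.2 ∧ p.1 < q.1) then 1
  else if (p.1 = q.1 ∧ q.2 < p.2) ∨ (p.2 = q.2 ∧ q.1 < p.1) then -1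
  else 0

/-- The skew-adjacency matrix `M(D)` of a diagram `D`, with rows and columns
indexed by the white squares of `D`. -/
def skewAdj {m n : ℕ} (D : Diagram m n) :
    Matrix {p : Fin m × Fin n // p ∈ whites D} {p : Fin m × Fin n // p ∈ whites D} ℤ :=
  fun p q => adjEntry p.1 q.1

open Classical in
/-- `P m n`: the number of primitive `m × n` Cauchon diagrams, i.e. `m × n`
Cauchon diagrams whose skew-adjacency matrix has nonzero determinant.  (This is
the number of torus-invariant primitive ideals in `m × n` quantum matrices.) -/
noncomputable def P (m n : ℕ) : ℕ :=
  ((Finset.univ : Finset (Diagram m n)).filter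
    (fun D => IsCauchon D ∧ (skewAdj D).det ≠ 0)).card

/-!
Read a diagram column by column. Both defining conditions of `P m n` are then recognised by a
finite automaton, so `P m n` counts the words of length `n` of a regular language, and such counts
satisfy a linear recurrence by Cayley–Hamilton applied to the transfer matrix of the automaton.

For the Cauchon condition the automaton only has to remember which rows already contain a white
square. For primitivity, a vector `x` on the white squares interacts with later columns only through
its row sums. The pairs (row sums of `x`, row-constant right-hand side `c`) for which `M x = c` on
the white squares are exactly the pairs `(σ u - u, u + σ u)`, and they determine `x`; here `σ` is
the signed permutation obtained by composing, column by column, the signed cyclic shifts of the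
white rows of each column (the Cayley transforms of the skew matrices of the columns). Hence
`det M(C) ≠ 0` if and only if `-1` is not an eigenvalue of `σ`, and `σ` ranges over the finite
group of signed permutations.
-/

open Matrix

/-! ## Linear recurrences from finite automata -/

open Polynomial in
theorem Polynomial.Monic.exists_charPoly_eq {R : Type*} [CommRing R] {p : R[X]} (hp : p.Monic) :
    ∃ E : LinearRecurrence R, E.charPoly = p :=
  ⟨⟨p.natDegree, fun i => -p.coeff i⟩, by
    conv_rhs => rw [hp.as_sum]
    simp [LinearRecurrence.charPoly, ← C_mul_X_pow_eq_monomial, sub_eq_add_neg,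
      Fin.sum_univ_eq_sum_range (fun i => C (p.coeff i) * X ^ i)]⟩

open Polynomial in
theorem LinearRecurrence.isSolution_map_pow {R A : Type*} [CommRing R] [Ring A] [Algebra R A]
    (E : LinearRecurrence R) {a : A} (ha : aeval a E.charPoly = 0) (f : A →ₗ[R] R) :
    E.IsSolution fun n => f (a ^ n) := by
  have hpow : a ^ E.order = ∑ i, E.coeffs i • a ^ (i : ℕ) := by
    simpa [charPoly, aeval_monomial, sub_eq_zero, Algebra.smul_def] using ha
  intro n
  simp [pow_add, hpow, Finset.mul_sum]

theorem Matrix.exists_isSolution_map_pow {R ι : Type*} [CommRing R] [Fintype ι] [DecidableEq ι]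
    (T : Matrix ι ι R) (f : Matrix ι ι R →ₗ[R] R) :
    ∃ E : LinearRecurrence R, E.IsSolution fun n => f (T ^ n) := by
  obtain ⟨E, hE⟩ := T.charpoly_monic.exists_charPoly_eq
  exact ⟨E, E.isSolution_map_pow (by rw [hE, aeval_self_charpoly]) f⟩

theorem LinearRecurrence.IsSolution.eq_sum_rev {R : Type*} [CommSemiring R]
    {E : LinearRecurrence R} {u : ℕ → R} (h : E.IsSolution u) {n : ℕ} (hn : E.order ≤ n) :
    u n = ∑ i : Fin E.order, E.coeffs i.rev * u (n - (i + 1)) := by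
  obtain ⟨k, rfl⟩ : ∃ k, n = k + E.order := ⟨n - E.order, by omega⟩
  rw [h k, ← Equiv.sum_comp Fin.revPerm]
  refine sum_congr rfl fun i _ => ?_
  simp only [Fin.revPerm_apply, Fin.val_rev]
  congr 2
  omega

namespace DFA

variable {α σ : Type*} [Fintype α] (M : DFA α σ)

theorem natCard_ofFn_mem_acceptsFrom_succ (n : ℕ) (s : σ) :
    Nat.card {w : Fin (n + 1) → α // List.ofFn w ∈ M.acceptsFrom s} =
      ∑ a, Nat.card {w : Fin n → α // List.ofFn w ∈ M.acceptsFrom (M.step s a)} := by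
  rw [← Nat.card_sigma]
  refine Nat.card_congr ((Equiv.subtypeEquiv (Fin.consEquiv fun _ => α).symm fun w => ?_).trans
    (Equiv.subtypeProdEquivSigmaSubtype fun a w => List.ofFn w ∈ M.acceptsFrom (M.step s a)))
  simp only [List.ofFn_succ, mem_acceptsFrom, evalFrom_cons, Fin.consEquiv, Equiv.symm_mk,
    Equiv.coe_fn_mk]
  rfl

def transferMatrix (R : Type*) [Semiring R] [DecidableEq σ] : Matrix σ σ R :=
  .of fun s s' => #{a | M.step s a = s'}

theorem natCard_ofFn_mem_acceptsFrom {R : Type*} [CommRing R] [Fintype σ] [DecidableEq σ]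
    (n : ℕ) (s : σ) :
    (Nat.card {w : Fin n → α // List.ofFn w ∈ M.acceptsFrom s} : R) =
      (M.transferMatrix R ^ n *ᵥ M.accept.indicator 1) s := by
  induction n generalizing s with
  | zero => by_cases hs : s ∈ M.accept <;> simp [mem_acceptsFrom, hs]
  | succ n ih =>
    rw [natCard_ofFn_mem_acceptsFrom_succ, pow_succ', ← mulVec_mulVec, Nat.cast_sum]
    change _ = ∑ s', M.transferMatrix R s s' * (M.transferMatrix R ^ n *ᵥ M.accept.indicator 1) s'
    simp only [← ih]
    rw [← Finset.sum_fiberwise Finset.univ (M.step s)]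
    refine Finset.sum_congr rfl fun s' _ => ?_
    rw [Finset.sum_congr rfl fun a ha => by rw [(Finset.mem_filter.1 ha).2], Finset.sum_const,
      nsmul_eq_mul]
    rfl

end DFA

theorem Language.IsRegular.exists_isSolution_natCard {α : Type*} [Fintype α] {L : Language α}
    (hL : L.IsRegular) (R : Type*) [CommRing R] :
    ∃ E : LinearRecurrence R,
      E.IsSolution fun n => (Nat.card {w : Fin n → α // List.ofFn w ∈ L} : R) := by
  classical
  obtain ⟨σ, _, M, rfl⟩ := hL
  let f : Matrix σ σ R →ₗ[R] R :=
    { toFun := fun B => (B *ᵥ M.accept.indicator 1) M.start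
      map_add' := fun B C => by simp [add_mulVec]
      map_smul' := fun c B => by simp [smul_mulVec] }
  obtain ⟨E, hE⟩ := (M.transferMatrix R).exists_isSolution_map_pow f
  refine ⟨E, fun n => ?_⟩
  simpa only [f, LinearMap.coe_mk, AddHom.coe_mk, DFA.accepts,
    ← M.natCard_ofFn_mem_acceptsFrom] using hE n

/-! ## Skew-symmetric matrices and signed permutations -/

theorem Matrix.eq_zero_of_transpose_eq_neg_of_mulVec_eq_mul {K ι : Type*} [CommRing K]
    [LinearOrder K] [IsStrictOrderedRing K] [Fintype ι] {A : Matrix ι ι K} (hA : Aᵀ = -A)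
    {z : ι → K} {ε : K} (hε : ε ≠ 0) (hz : ∀ t, z t ≠ 0 → (A *ᵥ z) t = ε * z t) : z = 0 := by
  have hskew : z ⬝ᵥ (A *ᵥ z) = 0 := by
    have h : z ⬝ᵥ (A *ᵥ z) = -(z ⬝ᵥ (A *ᵥ z)) := by
      conv_lhs => rw [dotProduct_mulVec, ← mulVec_transpose, hA, neg_mulVec, neg_dotProduct,
        dotProduct_comm]
    linarith
  have heigen : z ⬝ᵥ (A *ᵥ z) = ε * (z ⬝ᵥ z) := by
    simp only [dotProduct, Finset.mul_sum]
    refine Finset.sum_congr rfl fun t _ => ?_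
    by_cases ht : z t = 0
    · simp [ht]
    · rw [hz t ht]; ring
  rw [heigen] at hskew
  exact dotProduct_self_eq_zero.1 ((mul_eq_zero.1 hskew).resolve_left hε)

def cmpSign {α : Type*} [LinearOrder α] (a b : α) : ℤ :=
  if a < b then 1 else if b < a then -1 else 0

theorem cmpSign_swap {α : Type*} [LinearOrder α] (a b : α) : cmpSign b a = -cmpSign a b := by
  unfold cmpSign
  rcases lt_trichotomy a b with h | rfl | h
  · simp [h, asymm h]
  · simp
  · simp [h, asymm h]

theorem StrictMono.cmpSign_comp {α β : Type*} [LinearOrder α] [LinearOrder β] {f : α → β}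
    (hf : StrictMono f) (a b : α) : cmpSign (f a) (f b) = cmpSign a b := by
  simp [cmpSign, hf.lt_iff_lt]

theorem sum_range_cmpSign_mul_sub {R : Type*} [CommRing R] (F : ℕ → R) {i k : ℕ} (hik : i < k) :
    ∑ l ∈ range k, (cmpSign i l : R) * (F (l + 1) - F l) = (F k - F (i + 1)) - (F i - F 0) := by
  have hlow : ∑ l ∈ range i, (cmpSign i l : R) * (F (l + 1) - F l) = -(F i - F 0) := by
    rw [← sum_range_sub, ← sum_neg_distrib]
    refine sum_congr rfl fun l hl => ?_
    have hli : l < i := mem_range.1 hl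
    simp [cmpSign, hli, asymm hli]
  have hhigh : ∑ l ∈ Ico (i + 1) k, (cmpSign i l : R) * (F (l + 1) - F l) = F k - F (i + 1) := by
    rw [sum_congr rfl fun l hl => by
        rw [cmpSign, if_pos (by simp at hl; omega), Int.cast_one, one_mul],
      sum_Ico_eq_sub _ hik, sum_range_sub, sum_range_sub]
    ring
  rw [← sum_range_add_sum_Ico _ hik, sum_range_succ, hlow, hhigh]
  simp only [cmpSign, lt_self_iff_false, ↓reduceIte, Int.cast_zero, zero_mul, add_zero]
  ring

def colSkew (m : ℕ) : Matrix (Fin m) (Fin m) ℚ :=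
  .of fun t t' => cmpSign t t'

theorem colSkew_transpose (m : ℕ) : (colSkew m)ᵀ = -colSkew m := by
  ext t t'
  simp [colSkew, cmpSign_swap t t']

theorem Matrix.det_submatrix_subtype_eq_zero_iff {K ι : Type*} [Field K] [Fintype ι]
    [DecidableEq ι] (A : Matrix ι ι K) (s : Finset ι) :
    (A.submatrix ((↑) : s → ι) (↑)).det = 0 ↔
      ∃ x ≠ 0, (∀ i ∉ s, x i = 0) ∧ ∀ i ∈ s, (A *ᵥ x) i = 0 := by
  have hmulVec (x : ι → K) (hx : ∀ i ∉ s, x i = 0) (i : ι) :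
      (A *ᵥ x) i = ∑ j : s, A i j * x j := by
    rw [mulVec, dotProduct, sum_coe_sort s fun j => A i j * x j]
    exact (sum_subset (subset_univ s) fun j _ hj => by simp [hx j hj]).symm
  rw [← exists_mulVec_eq_zero_iff]
  constructor
  · rintro ⟨v, hv, hAv⟩
    let x : ι → K := fun i => if h : i ∈ s then v ⟨i, h⟩ else 0
    have hx : ∀ i ∉ s, x i = 0 := fun i hi => dif_neg hi
    refine ⟨x, fun h0 => hv (funext fun j => by simpa [x] using congrFun h0 j), hx,
      fun i hi => ?_⟩
    rw [hmulVec x hx]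
    simpa [x, mulVec, dotProduct] using congrFun hAv ⟨i, hi⟩
  · rintro ⟨x, hx0, hx, hAx⟩
    refine ⟨fun j => x j, fun h0 => hx0 (funext fun i => ?_), funext fun i => ?_⟩
    · by_cases hi : i ∈ s
      · exact congrFun h0 ⟨i, hi⟩
      · exact hx i hi
    · rw [Pi.zero_apply, ← hAx i i.2, hmulVec x hx]
      rfl

theorem coe_finRotate_symm {k : ℕ} (l : Fin k) :
    ((finRotate k).symm l : ℕ) = if (l : ℕ) = 0 then k - 1 else l - 1 := by
  obtain ⟨k, rfl⟩ : ∃ k', k = k' + 1 := ⟨k - 1, by have := l.is_lt; omega⟩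
  rw [finRotate_symm_apply, Fin.coe_sub_one]
  simp only [Fin.ext_iff, Fin.val_zero, Nat.add_sub_cancel]

abbrev SignedPerm (m : ℕ) := Equiv.Perm (Fin m) × (Fin m → ℤˣ)

namespace SignedPerm

variable {m : ℕ}

def act (g : SignedPerm m) (v : Fin m → ℚ) : Fin m → ℚ :=
  fun t => ((g.2 t : ℤ) : ℚ) * v (g.1 t)

def comp (h g : SignedPerm m) : SignedPerm m :=
  (g.1 * h.1, fun t => h.2 t * g.2 (h.1 t))

@[simp]
theorem act_one (v : Fin m → ℚ) : act 1 v = v := by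
  funext t; simp [act]

@[simp]
theorem act_comp (h g : SignedPerm m) (v : Fin m → ℚ) : (h.comp g).act v = h.act (g.act v) := by
  funext t; simp [act, comp, mul_assoc]

/-- The signed cyclic shift of the elements `t₀ < t₁ < ⋯ < t_{k-1}` of `s`: it sends the basis
vector `e_{t_l}` to `e_{t_{l+1}}`, except that `e_{t_{k-1}}` goes to `-e_{t₀}`. -/
def cycle (s : Finset (Fin m)) : SignedPerm m :=
  (Equiv.Perm.extendDomain (finRotate #s).symm (s.orderIsoOfFin rfl).toEquiv,
    fun t => if h : t ∈ s then if ((s.orderIsoOfFin rfl).symm ⟨t, h⟩ : ℕ) = 0 then -1 else 1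
      else 1)

theorem act_cycle_of_notMem {s : Finset (Fin m)} {t : Fin m} (ht : t ∉ s) (v : Fin m → ℚ) :
    (cycle s).act v t = v t := by
  simp [act, cycle, ht, Equiv.Perm.extendDomain_apply_not_subtype]

theorem act_cycle_orderIsoOfFin (s : Finset (Fin m)) (v : Fin m → ℚ) (l : Fin #s) :
    (cycle s).act v (s.orderIsoOfFin rfl l) =
      (if (l : ℕ) = 0 then -1 else 1) * v (s.orderIsoOfFin rfl ((finRotate #s).symm l)) := by
  simp only [act, cycle, dif_pos (Subtype.prop _),
    Equiv.Perm.extendDomain_apply_subtype _ _ (Subtype.prop _), Subtype.coe_eta,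
    OrderIso.symm_apply_apply]
  split_ifs <;> simp

/-- The signed cycle of `s` is the Cayley transform of the restriction of `colSkew m` to `s`. -/
theorem colSkew_mulVec_act_cycle_sub (s : Finset (Fin m)) (v : Fin m → ℚ) {t : Fin m}
    (ht : t ∈ s) : (colSkew m *ᵥ ((cycle s).act v - v)) t = v t + (cycle s).act v t := by
  set e := s.orderIsoOfFin rfl
  -- `F (l + 1) = v (e l)` for `l < #s`, and `F 0 = -v (e (#s - 1))`
  let g : ℕ → ℚ := fun l => if h : l < #s then v (e ⟨l, h⟩) else 0
  let F : ℕ → ℚ := fun l => if l = 0 then -g (#s - 1) else g (l - 1)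
  have hv (l : Fin #s) : v (e l) = F (l + 1) := by simp [F, g]
  have hS (l : Fin #s) : (cycle s).act v (e l) = F l := by
    have hk : #s - 1 < #s := by have := l.is_lt; omega
    rw [act_cycle_orderIsoOfFin, hv, coe_finRotate_symm]
    split_ifs with hl <;> simp [F, g, hl, hk]
  have hmono : StrictMono fun l => (e l : Fin m) := fun a b h =>
    Subtype.coe_lt_coe.2 (e.lt_iff_lt.2 h)
  obtain ⟨i, rfl⟩ : ∃ i, (e i : Fin m) = t :=
    ⟨e.symm ⟨t, ht⟩, congrArg Subtype.val (e.apply_symm_apply _)⟩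
  have hsum : (colSkew m *ᵥ ((cycle s).act v - v)) (e i) =
      -∑ l ∈ range #s, (cmpSign (i : ℕ) l : ℚ) * (F (l + 1) - F l) := by
    rw [mulVec, dotProduct, ← sum_subset (subset_univ s) fun t' _ ht' => by
      simp [act_cycle_of_notMem ht'], ← sum_coe_sort, ← e.toEquiv.sum_comp,
      ← Fin.sum_univ_eq_sum_range, ← sum_neg_distrib]
    refine sum_congr rfl fun l _ => ?_
    simp only [colSkew, of_apply, Pi.sub_apply, RelIso.coe_fn_toEquiv, hS, hv,
      hmono.cmpSign_comp, Fin.val_strictMono.cmpSign_comp]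
    ring
  have hF : F #s = -F 0 := by simp [F, g, i.pos.ne']
  rw [hsum, sum_range_cmpSign_mul_sub F i.is_lt, hv, hS, hF]
  ring

end SignedPerm

/-! ## The skew-adjacency equations, column by column -/

def Col.whites {m : ℕ} (a : Col m) : Finset (Fin m) := {i | a i = true}

namespace Diagram

variable {m n : ℕ}

def dropLast (D : Diagram m (n + 1)) : Diagram m n := fun i j => D i j.castSucc

def lastCol (D : Diagram m (n + 1)) : Col m := fun i => D i (Fin.last n)

def ofCols (w : Fin n → Col m) : Diagram m n := fun i j => w j i

theorem ofCols_dropLast (w : Fin (n + 1) → Col m) : (ofCols w).dropLast = ofCols (Fin.init w) :=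
  rfl

theorem ofCols_lastCol (w : Fin (n + 1) → Col m) : (ofCols w).lastCol = w (Fin.last n) :=
  rfl

theorem mem_whites_castSucc (D : Diagram m (n + 1)) (i : Fin m) (j : Fin n) :
    (i, j.castSucc) ∈ whites D ↔ (i, j) ∈ whites D.dropLast := by
  simp only [whites, Finset.mem_filter, Finset.mem_univ, true_and]; rfl

theorem mem_whites_last (D : Diagram m (n + 1)) (t : Fin m) :
    (t, Fin.last n) ∈ whites D ↔ t ∈ D.lastCol.whites := by
  simp only [whites, Col.whites, Finset.mem_filter, Finset.mem_univ, true_and]; rfl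

def adjMatrix (m n : ℕ) : Matrix (Fin m × Fin n) (Fin m × Fin n) ℚ :=
  .of fun p q => adjEntry p q

def rowSum (x : Fin m × Fin n → ℚ) : Fin m → ℚ := fun t => ∑ j, x (t, j)

def glue (x₀ : Fin m × Fin n → ℚ) (y : Fin m → ℚ) : Fin m × Fin (n + 1) → ℚ :=
  fun p => Fin.snoc (α := fun _ => ℚ) (fun j => x₀ (p.1, j)) (y p.1) p.2

@[simp]
theorem glue_castSucc (x₀ : Fin m × Fin n → ℚ) (y : Fin m → ℚ) (i : Fin m) (j : Fin n) :
    glue x₀ y (i, j.castSucc) = x₀ (i, j) := by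
  simp [glue]

@[simp]
theorem glue_last (x₀ : Fin m × Fin n → ℚ) (y : Fin m → ℚ) (t : Fin m) :
    glue x₀ y (t, Fin.last n) = y t := by
  simp [glue]

theorem exists_glue_eq (x : Fin m × Fin (n + 1) → ℚ) : ∃ x₀ y, glue x₀ y = x :=
  ⟨fun q => x (q.1, q.2.castSucc), fun t => x (t, Fin.last n), funext fun ⟨i, j⟩ => by
    induction j using Fin.lastCases <;> simp⟩

@[simp]
theorem glue_zero : glue (0 : Fin m × Fin n → ℚ) 0 = 0 := by
  funext ⟨i, j⟩
  induction j using Fin.lastCases <;> simp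

theorem rowSum_glue (x₀ : Fin m × Fin n → ℚ) (y : Fin m → ℚ) :
    rowSum (glue x₀ y) = rowSum x₀ + y := by
  funext t
  simp [rowSum, Fin.sum_univ_castSucc]

theorem adjEntry_castSucc_castSucc (i i' : Fin m) (j j' : Fin n) :
    adjEntry (i, j.castSucc) (i', j'.castSucc) = adjEntry (i, j) (i', j') := by
  simp [adjEntry]

theorem adjEntry_castSucc_last (i t : Fin m) (j : Fin n) :
    adjEntry (i, j.castSucc) (t, Fin.last n) = if i = t then 1 else 0 := by
  simp [adjEntry, Fin.castSucc_lt_last, (Fin.castSucc_lt_last j).ne,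
    (Fin.castSucc_lt_last j).not_gt]

theorem adjEntry_last_castSucc (t i : Fin m) (j : Fin n) :
    adjEntry (t, Fin.last n) (i, j.castSucc) = if t = i then -1 else 0 := by
  simp [adjEntry, Fin.castSucc_lt_last, (Fin.castSucc_lt_last j).ne',
    (Fin.castSucc_lt_last j).not_gt]

theorem adjEntry_last_last (t t' : Fin m) :
    adjEntry (t, Fin.last n) (t', Fin.last n) = cmpSign t t' := by
  simp [adjEntry, cmpSign]

theorem adjMatrix_mulVec_glue_castSucc (x₀ : Fin m × Fin n → ℚ) (y : Fin m → ℚ) (i : Fin m)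
    (j : Fin n) :
    (adjMatrix m (n + 1) *ᵥ glue x₀ y) (i, j.castSucc) = (adjMatrix m n *ᵥ x₀) (i, j) + y i := by
  simp [adjMatrix, mulVec, dotProduct, Fintype.sum_prod_type, Fin.sum_univ_castSucc,
    sum_add_distrib, adjEntry_castSucc_castSucc, adjEntry_castSucc_last]

theorem adjMatrix_mulVec_glue_last (x₀ : Fin m × Fin n → ℚ) (y : Fin m → ℚ) (t : Fin m) :
    (adjMatrix m (n + 1) *ᵥ glue x₀ y) (t, Fin.last n) = (colSkew m *ᵥ y) t - rowSum x₀ t := by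
  simp [adjMatrix, mulVec, dotProduct, Fintype.sum_prod_type, Fin.sum_univ_castSucc,
    sum_add_distrib, adjEntry_last_castSucc, adjEntry_last_last, colSkew, rowSum]
  ring

def SupportedOn (D : Diagram m n) (x : Fin m × Fin n → ℚ) : Prop :=
  ∀ p ∉ whites D, x p = 0

def SolvesRows (D : Diagram m n) (x : Fin m × Fin n → ℚ) (c : Fin m → ℚ) : Prop :=
  ∀ p ∈ whites D, (adjMatrix m n *ᵥ x) p = c p.1

theorem supportedOn_glue_iff {D : Diagram m (n + 1)} {x₀ : Fin m × Fin n → ℚ} {y : Fin m → ℚ} :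
    D.SupportedOn (glue x₀ y) ↔ D.dropLast.SupportedOn x₀ ∧ ∀ t ∉ D.lastCol.whites, y t = 0 := by
  simp only [SupportedOn, Prod.forall, Fin.forall_fin_succ', mem_whites_castSucc, mem_whites_last,
    glue_castSucc, glue_last, forall_and]

theorem solvesRows_glue_iff {D : Diagram m (n + 1)} {x₀ : Fin m × Fin n → ℚ} {y c : Fin m → ℚ} :
    D.SolvesRows (glue x₀ y) c ↔ D.dropLast.SolvesRows x₀ (c - y) ∧
      ∀ t ∈ D.lastCol.whites, (colSkew m *ᵥ y) t - rowSum x₀ t = c t := by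
  simp only [SolvesRows, Prod.forall, Fin.forall_fin_succ', mem_whites_castSucc, mem_whites_last,
    adjMatrix_mulVec_glue_castSucc, adjMatrix_mulVec_glue_last, Pi.sub_apply, eq_sub_iff_add_eq,
    forall_and]

def signedPerm : {n : ℕ} → Diagram m n → SignedPerm m
  | 0, _ => 1
  | _ + 1, D => (SignedPerm.cycle D.lastCol.whites).comp D.dropLast.signedPerm

@[simp]
theorem act_signedPerm_zero (D : Diagram m 0) (u : Fin m → ℚ) : D.signedPerm.act u = u := by
  simp [signedPerm]

theorem act_signedPerm_succ (D : Diagram m (n + 1)) (u : Fin m → ℚ) :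
    D.signedPerm.act u = (SignedPerm.cycle D.lastCol.whites).act (D.dropLast.signedPerm.act u) := by
  simp [signedPerm]

@[simp]
theorem rowSum_of_width_zero (x : Fin m × Fin 0 → ℚ) : rowSum x = 0 := by
  funext t; simp [rowSum]

theorem exists_supportedOn_solvesRows (D : Diagram m n) (u : Fin m → ℚ) :
    ∃ x, D.SupportedOn x ∧ D.SolvesRows x (u + D.signedPerm.act u) ∧
      rowSum x = D.signedPerm.act u - u := by
  induction n with
  | zero => exact ⟨0, fun p => p.2.elim0, fun p => p.2.elim0, by simp⟩
  | succ n ih =>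
    obtain ⟨x₀, hsupp, hrows, hsum⟩ := ih D.dropLast
    set v := D.dropLast.signedPerm.act u
    set S := SignedPerm.cycle D.lastCol.whites
    refine ⟨glue x₀ (S.act v - v), supportedOn_glue_iff.2 ⟨hsupp, fun t ht => ?_⟩,
      solvesRows_glue_iff.2 ⟨?_, fun t ht => ?_⟩, ?_⟩
    · simp [S, SignedPerm.act_cycle_of_notMem ht]
    · convert hrows using 1
      rw [act_signedPerm_succ]
      abel
    · rw [SignedPerm.colSkew_mulVec_act_cycle_sub _ _ ht, hsum, act_signedPerm_succ]
      simp only [Pi.add_apply, Pi.sub_apply]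
      ring
    · rw [rowSum_glue, hsum, act_signedPerm_succ]
      abel

theorem SolvesRows.exists_eq {D : Diagram m n} {x : Fin m × Fin n → ℚ} {c : Fin m → ℚ}
    (hsupp : D.SupportedOn x) (hrows : D.SolvesRows x c) :
    ∃ u, c = u + D.signedPerm.act u ∧ rowSum x = D.signedPerm.act u - u := by
  induction n generalizing c with
  | zero =>
    refine ⟨(2 : ℚ)⁻¹ • c, funext fun t => ?_, by simp⟩
    simp only [act_signedPerm_zero, Pi.add_apply, Pi.smul_apply, smul_eq_mul]
    ring
  | succ n ih =>
    obtain ⟨x₀, y, rfl⟩ := exists_glue_eq x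
    obtain ⟨hsupp₀, hy⟩ := supportedOn_glue_iff.1 hsupp
    obtain ⟨hrows₀, hlast⟩ := solvesRows_glue_iff.1 hrows
    obtain ⟨u, hu, hsum⟩ := ih hsupp₀ hrows₀
    set v := D.dropLast.signedPerm.act u
    have hyS : y = (SignedPerm.cycle D.lastCol.whites).act v - v := by
      refine sub_eq_zero.1 (Matrix.eq_zero_of_transpose_eq_neg_of_mulVec_eq_mul
        (colSkew_transpose m) one_ne_zero fun t hz => ?_)
      have ht : t ∈ D.lastCol.whites := by
        by_contra ht
        simp [hy t ht, SignedPerm.act_cycle_of_notMem ht] at hz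
      have hct := congrFun hu t
      have hsumt := congrFun hsum t
      simp only [Pi.sub_apply, Pi.add_apply] at hct hsumt ⊢
      rw [mulVec_sub, Pi.sub_apply, SignedPerm.colSkew_mulVec_act_cycle_sub _ _ ht]
      linarith [hlast t ht]
    refine ⟨u, ?_, ?_⟩
    · rw [act_signedPerm_succ, ← sub_add_cancel c y, hu, hyS]
      abel
    · rw [rowSum_glue, hsum, act_signedPerm_succ, hyS]
      abel

theorem eq_zero_of_solvesRows_zero {D : Diagram m n} {x : Fin m × Fin n → ℚ}
    (hsupp : D.SupportedOn x) (hrows : D.SolvesRows x 0) (hsum : rowSum x = 0) : x = 0 := by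
  induction n with
  | zero => funext p; exact p.2.elim0
  | succ n ih =>
    obtain ⟨x₀, y, rfl⟩ := exists_glue_eq x
    obtain ⟨hsupp₀, hy⟩ := supportedOn_glue_iff.1 hsupp
    obtain ⟨hrows₀, hlast⟩ := solvesRows_glue_iff.1 hrows
    rw [rowSum_glue, add_eq_zero_iff_eq_neg] at hsum
    have hy0 : y = 0 := by
      refine Matrix.eq_zero_of_transpose_eq_neg_of_mulVec_eq_mul (colSkew_transpose m)
        (neg_ne_zero.2 one_ne_zero) fun t hz => ?_
      have ht : t ∈ D.lastCol.whites := by_contra fun ht => hz (hy t ht)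
      have := hlast t ht
      simp only [hsum, Pi.neg_apply, Pi.zero_apply] at this
      linarith
    subst hy0
    rw [ih hsupp₀ (by simpa using hrows₀) (by simpa using hsum), glue_zero]

theorem det_skewAdj_eq_zero_iff (D : Diagram m n) :
    (skewAdj D).det = 0 ↔ ∃ x ≠ 0, D.SupportedOn x ∧ D.SolvesRows x 0 := by
  have hcast : (Int.castRingHom ℚ).mapMatrix (skewAdj D) =
      (adjMatrix m n).submatrix ((↑) : whites D → Fin m × Fin n) (↑) := rfl
  rw [← Int.cast_eq_zero (α := ℚ), ← eq_intCast (Int.castRingHom ℚ), RingHom.map_det, hcast,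
    det_submatrix_subtype_eq_zero_iff]
  rfl

theorem det_skewAdj_ne_zero_iff (D : Diagram m n) :
    (skewAdj D).det ≠ 0 ↔ ∀ u, D.signedPerm.act u = -u → u = 0 := by
  rw [Ne, det_skewAdj_eq_zero_iff]
  constructor
  · intro hdet u hu
    obtain ⟨x, hsupp, hrows, hsum⟩ := exists_supportedOn_solvesRows D u
    by_contra hu0
    refine hdet ⟨x, fun hx0 => hu0 (funext fun t => ?_), hsupp, by simpa [hu] using hrows⟩
    have := congrFun hsum t
    simp only [rowSum, hx0, Pi.zero_apply, sum_const_zero, hu, Pi.sub_apply, Pi.neg_apply]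
      at this
    show u t = 0
    linarith
  · rintro h ⟨x, hx0, hsupp, hrows⟩
    obtain ⟨u, hu, hsum⟩ := hrows.exists_eq hsupp
    have hσ : D.signedPerm.act u = -u := (neg_eq_of_add_eq_zero_right hu.symm).symm
    refine hx0 (eq_zero_of_solvesRows_zero hsupp hrows ?_)
    rw [hsum, hσ, h u hσ]
    simp

end Diagram

/-! ## The automata -/

def Col.IsCauchonAfter {m : ℕ} (a : Col m) (r : Finset (Fin m)) : Prop :=
  ∀ i, a i = false → i ∉ r ∨ ∀ i' < i, a i' = false

namespace Diagram

variable {m n : ℕ}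

def whiteRows (D : Diagram m n) : Finset (Fin m) := {i | ∃ j, D i j = true}

theorem whiteRows_eq_union (D : Diagram m (n + 1)) :
    D.whiteRows = D.dropLast.whiteRows ∪ D.lastCol.whites := by
  ext i
  simp only [whiteRows, Col.whites, mem_union, mem_filter, mem_univ, true_and]
  simp [dropLast, lastCol, Fin.exists_fin_succ']

theorem isCauchon_iff_dropLast (D : Diagram m (n + 1)) :
    IsCauchon D ↔ IsCauchon D.dropLast ∧ D.lastCol.IsCauchonAfter D.dropLast.whiteRows := by
  simp only [IsCauchon, Col.IsCauchonAfter, whiteRows, mem_filter, mem_univ, true_and]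
  have hlast (j : Fin n) : ¬Fin.last n < j.castSucc := (Fin.castSucc_lt_last j).not_gt
  simp [dropLast, lastCol, Fin.forall_fin_succ', hlast, Fin.castSucc_lt_last, forall_and]

end Diagram

open Classical in
noncomputable def cauchonDFA (m : ℕ) : DFA (Col m) (Option (Finset (Fin m))) where
  step s a := s.bind fun r => if a.IsCauchonAfter r then some (r ∪ a.whites) else none
  start := some ∅
  accept := {s | s.isSome}

def primitiveDFA (m : ℕ) : DFA (Col m) (SignedPerm m) where
  step g a := (SignedPerm.cycle a.whites).comp g
  start := 1
  accept := {g | ∀ u, g.act u = -u → u = 0}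

open Classical in
theorem cauchonDFA_eval_ofFn {m n : ℕ} (w : Fin n → Col m) :
    (cauchonDFA m).eval (List.ofFn w) =
      if IsCauchon (Diagram.ofCols w) then some (Diagram.ofCols w).whiteRows else none := by
  induction n with
  | zero => simp [cauchonDFA, IsCauchon, Diagram.whiteRows]
  | succ n ih =>
    rw [List.ofFn_succ', List.concat_eq_append, DFA.eval_append_singleton, ← Fin.init_def, ih,
      Diagram.isCauchon_iff_dropLast, Diagram.whiteRows_eq_union, Diagram.ofCols_dropLast,
      Diagram.ofCols_lastCol]
    by_cases h : IsCauchon (Diagram.ofCols (Fin.init w)) <;> simp [cauchonDFA, h]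

theorem primitiveDFA_eval_ofFn {m n : ℕ} (w : Fin n → Col m) :
    (primitiveDFA m).eval (List.ofFn w) = (Diagram.ofCols w).signedPerm := by
  induction n with
  | zero => rfl
  | succ n ih =>
    rw [List.ofFn_succ', List.concat_eq_append, DFA.eval_append_singleton, ← Fin.init_def, ih]
    rfl

def primitiveCauchonWords (m : ℕ) : Language (Col m) :=
  (cauchonDFA m).accepts ⊓ (primitiveDFA m).accepts

theorem isRegular_primitiveCauchonWords (m : ℕ) : (primitiveCauchonWords m).IsRegular :=
  Language.IsRegular.inf ⟨_, inferInstance, _, rfl⟩ ⟨_, inferInstance, _, rfl⟩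

theorem ofFn_mem_primitiveCauchonWords {m n : ℕ} (w : Fin n → Col m) :
    List.ofFn w ∈ primitiveCauchonWords m ↔
      IsCauchon (Diagram.ofCols w) ∧ (skewAdj (Diagram.ofCols w)).det ≠ 0 := by
  rw [primitiveCauchonWords, Language.mem_inf, DFA.mem_accepts, DFA.mem_accepts,
    cauchonDFA_eval_ofFn, primitiveDFA_eval_ofFn, Diagram.det_skewAdj_ne_zero_iff]
  by_cases h : IsCauchon (Diagram.ofCols w) <;> simp [h, cauchonDFA, primitiveDFA]

theorem P_eq_natCard (m n : ℕ) :
    P m n = Nat.card {w : Fin n → Col m // List.ofFn w ∈ primitiveCauchonWords m} := by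
  classical
  rw [P, ← Fintype.card_subtype, ← Nat.card_eq_fintype_card]
  exact Nat.card_congr
    ((Equiv.piComm _).subtypeEquiv fun D => (ofFn_mem_primitiveCauchonWords _).symm)

theorem P_linear_recurrence_general (m : ℕ) :
    ∃ (d : ℕ) (c : Fin d → ℚ), ∀ n : ℕ, d ≤ n →
      (P m n : ℚ) = ∑ i : Fin d, c i * (P m (n - (i.1 + 1)) : ℚ) := by
  obtain ⟨E, hE⟩ := (isRegular_primitiveCauchonWords m).exists_isSolution_natCard ℚ
  refine ⟨E.order, fun i => E.coeffs i.rev, fun n hn => ?_⟩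
  simpa only [P_eq_natCard] using hE.eq_sum_rev hn

/-- For every fixed `m ≥ 1`, the sequence `n ↦ P(m,n)`
satisfies a linear recurrence over `ℚ`: there are `d : ℕ` and rational constants
`c₁, …, c_d` with `P(m,n) = Σ_{i=1}^d cᵢ P(m, n−i)` for all `n ≥ d`. -/
theorem P_linear_recurrence (m : ℕ) (hm : 0 < m) :
    ∃ (d : ℕ) (c : Fin d → ℚ), ∀ n : ℕ, d ≤ n →
      (P m n : ℚ) = ∑ i : Fin d, c i * (P m (n - (i.1 + 1)) : ℚ) :=
  P_linear_recurrence_general m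
end
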